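/- In the setting of the previous statement, suppose additionally that gₙ ∈ H satisfies Jₙ(gₙ) ≤ jₙ + αₙ^η with η > 1, and that P(gₙ) is bounded. Then ‖A gₙ − Φ‖ → 0 as n → ∞. -/

import Mathlib

/-!
For every competitor `h`, quasi-minimality of `gₙ` gives
`‖A gₙ - Φ‖² ≤ αₙ P(h) + ‖A h - Φ‖² + αₙ^η`, whose right-hand side tends to `‖A h - Φ‖²`
since `η > 0`. Hence `limsup ‖A gₙ - Φ‖² ≤ ‖A h - Φ‖²` for every `h`, and the infimum of the
right-hand side over `h` is `0` because `A` has dense range.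
-/

open Filter Topology

lemma DenseRange.exists_norm_sub_sq_lt {X E : Type*} [SeminormedAddCommGroup E] {f : X → E}
    (hf : DenseRange f) (y : E) {b : ℝ} (hb : 0 < b) : ∃ x, ‖f x - y‖ ^ 2 < b := by
  obtain ⟨x, hx⟩ := hf.exists_dist_lt y (Real.sqrt_pos.2 hb)
  refine ⟨x, ?_⟩
  rw [dist_comm, dist_eq_norm] at hx
  exact (Real.lt_sqrt (norm_nonneg _)).1 hx

section QuasiMinimizer

variable {X : Type*} {P R : X → ℝ}

lemma residual_le_of_le_iInf_add (hP : ∀ x, 0 ≤ P x) (hR : ∀ x, 0 ≤ R x) {a d : ℝ}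
    (ha : 0 ≤ a) {y : X} (hy : a * P y + R y ≤ (⨅ x, a * P x + R x) + d) (x : X) :
    R y ≤ a * P x + R x + d := by
  have hbdd : BddBelow (Set.range fun x => a * P x + R x) :=
    ⟨0, by rintro _ ⟨x, rfl⟩; exact add_nonneg (mul_nonneg ha (hP x)) (hR x)⟩
  have hinf : (⨅ x, a * P x + R x) ≤ a * P x + R x := ciInf_le hbdd x
  have hpen : 0 ≤ a * P y := mul_nonneg ha (hP y)
  linarith

lemma tendsto_residual_of_le_iInf_add {α δ : ℕ → ℝ} {g : ℕ → X} (hα : ∀ n, 0 ≤ α n)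
    (hα0 : Tendsto α atTop (𝓝 0)) (hδ0 : Tendsto δ atTop (𝓝 0))
    (hP : ∀ x, 0 ≤ P x) (hR : ∀ x, 0 ≤ R x) (hRinf : ∀ b > 0, ∃ x, R x < b)
    (hg : ∀ n, α n * P (g n) + R (g n) ≤ (⨅ x, α n * P x + R x) + δ n) :
    Tendsto (fun n => R (g n)) atTop (𝓝 0) := by
  refine tendsto_order.2 ⟨fun a ha => .of_forall fun n => ha.trans_le (hR _), fun b hb => ?_⟩
  obtain ⟨x, hx⟩ := hRinf b hb
  have hbound : Tendsto (fun n => α n * P x + R x + δ n) atTop (𝓝 (R x)) := by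
    simpa using ((hα0.mul_const (P x)).add_const (R x)).add hδ0
  filter_upwards [hbound.eventually (gt_mem_nhds hx)] with n hn
  exact (residual_le_of_le_iInf_add hP hR (hα n) (hg n) x).trans_lt hn

end QuasiMinimizer

theorem stmt_3_general {H : Type*} [NormedAddCommGroup H] [InnerProductSpace ℂ H]
    (A : H →L[ℂ] H) (hA : DenseRange A) (Φ : H)
    (α : ℕ → ℝ) (hαpos : ∀ n, 0 < α n) (hα0 : Tendsto α atTop (nhds 0))
    (P : H → ℝ) (hP : ∀ g, 0 ≤ P g) (η : ℝ) (hη : 1 < η)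
    (g : ℕ → H)
    (hg : ∀ n, α n * P (g n) + ‖A (g n) - Φ‖ ^ 2 ≤
      (⨅ h : H, α n * P h + ‖A h - Φ‖ ^ 2) + α n ^ η) :
    Tendsto (fun n => ‖A (g n) - Φ‖) atTop (nhds 0) := by
  have hαη : Tendsto (fun n => α n ^ η) atTop (𝓝 0) := by
    have := hα0.rpow_const (p := η) (Or.inr (by linarith))
    rwa [Real.zero_rpow (by linarith)] at this
  have hsq : Tendsto (fun n => ‖A (g n) - Φ‖ ^ 2) atTop (𝓝 0) :=
    tendsto_residual_of_le_iInf_add (R := fun h => ‖A h - Φ‖ ^ 2) (fun n => (hαpos n).le)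
      hα0 hαη hP (fun _ => sq_nonneg _) (fun _ hb => hA.exists_norm_sub_sq_lt Φ hb) hg
  simpa [Real.sqrt_sq (norm_nonneg _)] using hsq.sqrt

/-- Quasi-minimizers of the GLSM cost functional with bounded penalty term
asymptotically solve the far field equation `A g = Φ`. -/
theorem stmt_3 {H : Type*} [NormedAddCommGroup H] [InnerProductSpace ℂ H]
    (A : H →L[ℂ] H) (hA : DenseRange A) (Φ : H)
    (α : ℕ → ℝ) (hαpos : ∀ n, 0 < α n) (hα0 : Tendsto α atTop (nhds 0))
    (P : H → ℝ) (hP : ∀ g, 0 ≤ P g) (η : ℝ) (hη : 1 < η)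
    (g : ℕ → H)
    (hg : ∀ n, α n * P (g n) + ‖A (g n) - Φ‖ ^ 2 ≤
      (⨅ h : H, α n * P h + ‖A h - Φ‖ ^ 2) + α n ^ η)
    (M : ℝ) (hM : ∀ n, P (g n) ≤ M) :
    Tendsto (fun n => ‖A (g n) - Φ‖) atTop (nhds 0) :=
  stmt_3_general A hA Φ α hαpos hα0 P hP η hη g hg
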